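/- arXiv:1601.01467 — 9 statements merged into one kernel-verified Lean document; each statement's English description precedes it below -/
import Mathlib

section
/- If S is a trifocal essential matrix, then the 3×3 matrix S Sᵀ has one zero eigenvalue and its two other eigenvalues are equal (both equal to (s₁ᵀt₂)(s₂ᵀt₁)). -/
open Matrix Polynomial

theorem stmt_1 (S : Matrix (Fin 3) (Fin 3) ℂ) (s₁ t₁ t₂ s₂ : Fin 3 → ℂ)
    (hs₁ : s₁ ≠ 0) (hs₂ : s₂ ≠ 0)
    (hiso₁ : s₁ ⬝ᵥ s₁ = 0) (hiso₂ : s₂ ⬝ᵥ s₂ = 0)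
    (hS : S = vecMulVec s₁ t₁ + vecMulVec t₂ s₂) :
    (S * Sᵀ).charpoly = X * (X - C ((s₁ ⬝ᵥ t₂) * (s₂ ⬝ᵥ t₁))) ^ 2 := by
  subst hS
  have h1 : (C (s₁ 0) : ℂ[X])^2 + C (s₁ 1)^2 + C (s₁ 2)^2 = 0 := by
    have := congrArg (C : ℂ →+* ℂ[X]) hiso₁
    simpa [dotProduct, Fin.sum_univ_three, sq] using this
  have h2 : (C (s₂ 0) : ℂ[X])^2 + C (s₂ 1)^2 + C (s₂ 2)^2 = 0 := by
    have := congrArg (C : ℂ →+* ℂ[X]) hiso₂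
    simpa [dotProduct, Fin.sum_univ_three, sq] using this
  rw [Matrix.charpoly, Matrix.det_fin_three]
  simp only [charmatrix_apply, Matrix.mul_apply, Fin.sum_univ_three, Matrix.add_apply,
    Matrix.transpose_apply, vecMulVec_apply, dotProduct, diagonal_apply, scalar_apply,
    _root_.map_add, _root_.map_mul, if_true, Fin.reduceEq, if_false, reduceIte]
  linear_combination (X*C (t₁ 2)^2*C (t₂ 2)^2*C (s₂ 1)^2 + X*C (t₁ 2)^2*C (t₂ 2)^2*C (s₂ 0)^2 + X*C (t₁ 2)^2*C (t₂ 1)^2*C (s₂ 1)^2 + X*C (t₁ 2)^2*C (t₂ 1)^2*C (s₂ 0)^2 - X*C (t₁ 2)^2*C (t₂ 0)^2*C (s₂ 2)^2 - 2*X*C (t₁ 1)*C (t₁ 2)*C (t₂ 2)^2*C (s₂ 1)*C (s₂ 2) - 2*X*C (t₁ 1)*C (t₁ 2)*C (t₂ 1)^2*C (s₂ 1)*C (s₂ 2) - 2*X*C (t₁ 1)*C (t₁ 2)*C (t₂ 0)^2*C (s₂ 1)*C (s₂ 2) + X*C (t₁ 1)^2*C (t₂ 2)^2*C (s₂ 2)^2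 + X*C (t₁ 1)^2*C (t₂ 2)^2*C (s₂ 0)^2 + X*C (t₁ 1)^2*C (t₂ 1)^2*C (s₂ 2)^2 + X*C (t₁ 1)^2*C (t₂ 1)^2*C (s₂ 0)^2 - X*C (t₁ 1)^2*C (t₂ 0)^2*C (s₂ 1)^2 - 2*X*C (t₁ 0)*C (t₁ 2)*C (t₂ 2)^2*C (s₂ 0)*C (s₂ 2) - 2*X*C (t₁ 0)*C (t₁ 2)*C (t₂ 1)^2*C (s₂ 0)*C (s₂ 2) - 2*X*C (t₁ 0)*C (t₁ 2)*C (t₂ 0)^2*C (s₂ 0)*C (s₂ 2) - 2*X*C (t₁ 0)*C (t₁ 1)*C (t₂ 2)^2*C (s₂ 0)*C (s₂ 1) - 2*X*C (t₁ 0)*C (t₁ 1)*C (t₂ 1)^2*C (s₂ 0)*C (s₂ 1) - 2*X*C (t₁ 0)*C (t₁ 1)*C (t₂ 0)^2*C (s₂ 0)*C (s₂ 1) + X*C (t₁ 0)^2*C (t₂ 2)^2*C (s₂ 2)^2 + X*C (t₁ 0)^2*C (t₂ 2)^2*C (s₂ 1)^2 + X*C (t₁ 0)^2*C (t₂ 1)^2*C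 (s₂ 2)^2 + X*C (t₁ 0)^2*C (t₂ 1)^2*C (s₂ 1)^2 - X*C (t₁ 0)^2*C (t₂ 0)^2*C (s₂ 0)^2 - X^2*C (t₁ 2)^2 - X^2*C (t₁ 1)^2 - X^2*C (t₁ 0)^2) * h1 + (-X*C (s₁ 2)^2*C (t₁ 2)^2*C (t₂ 2)^2 + X*C (s₁ 2)^2*C (t₁ 2)^2*C (t₂ 0)^2 - X*C (s₁ 2)^2*C (t₁ 1)^2*C (t₂ 2)^2 + X*C (s₁ 2)^2*C (t₁ 1)^2*C (t₂ 0)^2 - X*C (s₁ 2)^2*C (t₁ 0)^2*C (t₂ 2)^2 + X*C (s₁ 2)^2*C (t₁ 0)^2*C (t₂ 0)^2 - 2*X*C (s₁ 1)*C (s₁ 2)*C (t₁ 2)^2*C (t₂ 1)*C (t₂ 2) - 2*X*C (s₁ 1)*C (s₁ 2)*C (t₁ 1)^2*C (t₂ 1)*C (t₂ 2) - 2*X*C (s₁ 1)*C (s₁ 2)*C (t₁ 0)^2*C (t₂ 1)*C (t₂ 2) - X*C (s₁ 1)^2*C (t₁ 2)^2*C (t₂ 1)^2 + X*C (s₁ 1)^2*C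 (t₁ 2)^2*C (t₂ 0)^2 - X*C (s₁ 1)^2*C (t₁ 1)^2*C (t₂ 1)^2 + X*C (s₁ 1)^2*C (t₁ 1)^2*C (t₂ 0)^2 - X*C (s₁ 1)^2*C (t₁ 0)^2*C (t₂ 1)^2 + X*C (s₁ 1)^2*C (t₁ 0)^2*C (t₂ 0)^2 - 2*X*C (s₁ 0)*C (s₁ 2)*C (t₁ 2)^2*C (t₂ 0)*C (t₂ 2) - 2*X*C (s₁ 0)*C (s₁ 2)*C (t₁ 1)^2*C (t₂ 0)*C (t₂ 2) - 2*X*C (s₁ 0)*C (s₁ 2)*C (t₁ 0)^2*C (t₂ 0)*C (t₂ 2) - 2*X*C (s₁ 0)*C (s₁ 1)*C (t₁ 2)^2*C (t₂ 0)*C (t₂ 1) - 2*X*C (s₁ 0)*C (s₁ 1)*C (t₁ 1)^2*C (t₂ 0)*C (t₂ 1) - 2*X*C (s₁ 0)*C (s₁ 1)*C (t₁ 0)^2*C (t₂ 0)*C (t₂ 1) - X^2*C (t₂ 2)^2 - X^2*C (t₂ 1)^2 - X^2*C (t₂ 0)^2) * h2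
end

section
/- A 3×3 complex matrix S is a trifocal essential matrix if and only if det S = 0 and trace(S Sᵀ)² − 2 trace((S Sᵀ)²) = 0. -/
/-!
A matrix is a sum `u₁ v₁ᵀ + u₂ v₂ᵀ` exactly when `det S = 0`, and such a representation can be
rewritten as `(α u₁ + β u₂) t₁ᵀ + t₂ (α v₂ - β v₁)ᵀ` for any `(α, β) ≠ 0`. So `S` is trifocal
essential iff some `(α, β)` is a common zero of the binary quadratic forms
`|α u₁ + β u₂|²` and `|α v₂ - β v₁|²`, i.e. iff their resultant vanishes; and
`trace (S Sᵀ)² - 2 trace ((S Sᵀ)²)` is exactly minus that resultant.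
-/

open Matrix

def IsTrifocalEssential (S : Matrix (Fin 3) (Fin 3) ℂ) : Prop :=
  ∃ s₁ t₁ t₂ s₂ : Fin 3 → ℂ, s₁ ≠ 0 ∧ s₂ ≠ 0 ∧ s₁ ⬝ᵥ s₁ = 0 ∧ s₂ ⬝ᵥ s₂ = 0 ∧
    S = vecMulVec s₁ t₁ + vecMulVec t₂ s₂

section BinaryQuadratic

def binaryQuadResultant {R : Type*} [CommRing R] (a b c a' b' c' : R) : R :=
  (a * c' - a' * c) ^ 2 - (a * b' - a' * b) * (b * c' - b' * c)

lemma binaryQuadResultant_comm {R : Type*} [CommRing R] (a b c a' b' c' : R) :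
    binaryQuadResultant a' b' c' a b c = binaryQuadResultant a b c a' b' c' := by
  unfold binaryQuadResultant
  ring

variable {K : Type*} [Field K] [IsAlgClosed K]

lemma exists_common_root_of_binaryQuadResultant_eq_zero_of_ne_zero {a b c a' b' c' : K}
    (ha : a ≠ 0) (h : binaryQuadResultant a b c a' b' c' = 0) :
    ∃ α β : K, (α ≠ 0 ∨ β ≠ 0) ∧ a * α ^ 2 + b * α * β + c * β ^ 2 = 0 ∧
      a' * α ^ 2 + b' * α * β + c' * β ^ 2 = 0 := by
  obtain ⟨r, hr⟩ := IsAlgClosed.exists_root (Polynomial.C a * .X ^ 2 + .C b * .X + .C c)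
    (by rw [Polynomial.degree_quadratic ha]; decide)
  replace hr : a * r ^ 2 + b * r + c = 0 := by simpa using hr
  unfold binaryQuadResultant at h
  -- `(r, 1)` and `(-b - a r, a)` are the two roots of the first form, and the product of the
  -- second form over them is the resultant.
  have hprod : (a' * r ^ 2 + b' * r + c') *
      (a' * (-b - a * r) ^ 2 + b' * (-b - a * r) * a + c' * a ^ 2) = 0 := by
    linear_combination h + (a * a' ^ 2 * r ^ 2 + b * a' ^ 2 * r + a' * b' * b + 2 * a * a' * c'
      - a * b' ^ 2 - c * a' ^ 2) * hr
  rcases mul_eq_zero.mp hprod with h₁ | h₂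
  · exact ⟨r, 1, .inr one_ne_zero, by linear_combination hr, by linear_combination h₁⟩
  · exact ⟨-b - a * r, a, .inr ha, by linear_combination a ^ 2 * hr, h₂⟩

lemma exists_common_root_of_binaryQuadResultant_eq_zero {a b c a' b' c' : K}
    (h : binaryQuadResultant a b c a' b' c' = 0) :
    ∃ α β : K, (α ≠ 0 ∨ β ≠ 0) ∧ a * α ^ 2 + b * α * β + c * β ^ 2 = 0 ∧
      a' * α ^ 2 + b' * α * β + c' * β ^ 2 = 0 := by
  by_cases ha : a = 0
  · by_cases ha' : a' = 0
    · exact ⟨1, 0, .inl one_ne_zero, by simp [ha], by simp [ha']⟩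
    · rw [← binaryQuadResultant_comm] at h
      obtain ⟨α, β, hne, h', h⟩ :=
        exists_common_root_of_binaryQuadResultant_eq_zero_of_ne_zero ha' h
      exact ⟨α, β, hne, h, h'⟩
  · exact exists_common_root_of_binaryQuadResultant_eq_zero_of_ne_zero ha h

end BinaryQuadratic

section RankTwo

variable {K : Type*} [Field K] {n : Type*} [Fintype n] [DecidableEq n]

lemma eq_sum_vecMulVec_of_vecMul_eq_zero {S : Matrix n n K} {w : n → K} (hw : w ᵥ* S = 0)
    {k : n} (hk : w k ≠ 0) :
    S = ∑ i ∈ Finset.univ.erase k,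
      vecMulVec (Pi.single i 1 - (w i / w k) • Pi.single k 1) (S i) := by
  rw [Finset.sum_erase _ (by simp [div_self hk])]
  ext a b
  have hb : ∑ i, w i * S i b = 0 := congrFun hw b
  simp [Matrix.sum_apply, vecMulVec_apply, sub_mul, Finset.sum_sub_distrib, Pi.single_apply,
    div_mul_eq_mul_div, ← Finset.sum_div, hb]

lemma exists_eq_vecMulVec_add_vecMulVec_of_det_eq_zero {S : Matrix (Fin 3) (Fin 3) K}
    (h : S.det = 0) : ∃ u₁ v₁ u₂ v₂ : Fin 3 → K, S = vecMulVec u₁ v₁ + vecMulVec u₂ v₂ := by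
  obtain ⟨w, hw0, hw⟩ := exists_vecMul_eq_zero_iff.mpr h
  obtain ⟨k, hk⟩ := Function.ne_iff.mp hw0
  obtain ⟨i, j, hij, hk'⟩ := Finset.card_eq_two.mp (by simp : (Finset.univ.erase k).card = 2)
  have := eq_sum_vecMulVec_of_vecMul_eq_zero hw hk
  rw [hk', Finset.sum_pair hij] at this
  exact ⟨_, _, _, _, this⟩

end RankTwo

lemma vecMulVec_add_vecMulVec_eq_of_mul_sub_mul_eq_one {R m n : Type*} [CommRing R]
    (u₁ u₂ : m → R) (v₁ v₂ : n → R) {α β γ δ : R} (h : α * δ - β * γ = 1) :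
    vecMulVec u₁ v₁ + vecMulVec u₂ v₂ =
      vecMulVec (α • u₁ + β • u₂) (δ • v₁ - γ • v₂) +
        vecMulVec (γ • u₁ + δ • u₂) (α • v₂ - β • v₁) := by
  ext i j
  simp only [Matrix.add_apply, vecMulVec_apply, Pi.add_apply, Pi.sub_apply, Pi.smul_apply,
    smul_eq_mul]
  linear_combination (-(u₁ i * v₁ j + u₂ i * v₂ j)) * h

lemma exists_mul_sub_mul_eq_one {K : Type*} [Field K] {α β : K} (h : α ≠ 0 ∨ β ≠ 0) :
    ∃ γ δ : K, α * δ - β * γ = 1 := by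
  rcases h with hα | hβ
  · exact ⟨0, α⁻¹, by field_simp; ring⟩
  · exact ⟨-β⁻¹, 0, by field_simp; ring⟩

lemma smul_add_smul_dotProduct_self {R n : Type*} [CommRing R] [Fintype n] (u v : n → R)
    (α β : R) :
    (α • u + β • v) ⬝ᵥ (α • u + β • v) =
      (u ⬝ᵥ u) * α ^ 2 + 2 * (u ⬝ᵥ v) * α * β + (v ⬝ᵥ v) * β ^ 2 := by
  simp only [add_dotProduct, dotProduct_add, smul_dotProduct, dotProduct_smul, smul_eq_mul,
    dotProduct_comm v u]
  ring

lemma det_vecMulVec_add_vecMulVec {R : Type*} [CommRing R] (u₁ v₁ u₂ v₂ : Fin 3 → R) :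
    (vecMulVec u₁ v₁ + vecMulVec u₂ v₂).det = 0 := by
  simp only [det_fin_three, Matrix.add_apply, vecMulVec_apply]
  ring

lemma trace_sq_sub_two_mul_trace_sq_vecMulVec_add {R : Type*} [CommRing R]
    {S : Matrix (Fin 3) (Fin 3) R} {u₁ v₁ u₂ v₂ : Fin 3 → R}
    (hS : S = vecMulVec u₁ v₁ + vecMulVec u₂ v₂) :
    (S * Sᵀ).trace ^ 2 - 2 * (S * Sᵀ * (S * Sᵀ)).trace =
      -binaryQuadResultant (u₁ ⬝ᵥ u₁) (2 * (u₁ ⬝ᵥ u₂)) (u₂ ⬝ᵥ u₂)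
        (v₂ ⬝ᵥ v₂) (-2 * (v₁ ⬝ᵥ v₂)) (v₁ ⬝ᵥ v₁) := by
  subst hS
  simp only [binaryQuadResultant, trace_fin_three, mul_apply, Matrix.add_apply, transpose_apply,
    vecMulVec_apply, dotProduct, Fin.sum_univ_three]
  ring

lemma exists_ne_zero_dotProduct_self_eq_zero : ∃ s : Fin 3 → ℂ, s ≠ 0 ∧ s ⬝ᵥ s = 0 :=
  ⟨![1, Complex.I, 0], fun h => by simpa using congrFun h 0,
    by simp [dotProduct, Fin.sum_univ_three]⟩

lemma exists_vecMulVec_eq_of_dotProduct_self_eq_zero {s : Fin 3 → ℂ} (hs : s ⬝ᵥ s = 0)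
    (t : Fin 3 → ℂ) :
    ∃ s' t' : Fin 3 → ℂ, s' ≠ 0 ∧ s' ⬝ᵥ s' = 0 ∧ vecMulVec s t = vecMulVec s' t' := by
  by_cases h : s = 0
  · obtain ⟨s', hs'0, hs'⟩ := exists_ne_zero_dotProduct_self_eq_zero
    exact ⟨s', 0, hs'0, hs', by simp [h]⟩
  · exact ⟨s, t, h, hs, rfl⟩

lemma isTrifocalEssential_iff_exists {S : Matrix (Fin 3) (Fin 3) ℂ} :
    IsTrifocalEssential S ↔ ∃ s₁ t₁ t₂ s₂ : Fin 3 → ℂ, s₁ ⬝ᵥ s₁ = 0 ∧ s₂ ⬝ᵥ s₂ = 0 ∧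
      S = vecMulVec s₁ t₁ + vecMulVec t₂ s₂ := by
  refine ⟨fun ⟨s₁, t₁, t₂, s₂, _, _, h₁, h₂, hS⟩ => ⟨s₁, t₁, t₂, s₂, h₁, h₂, hS⟩, ?_⟩
  rintro ⟨s₁, t₁, t₂, s₂, h₁, h₂, rfl⟩
  obtain ⟨s₁', t₁', hs₁', h₁', e₁⟩ := exists_vecMulVec_eq_of_dotProduct_self_eq_zero h₁ t₁
  obtain ⟨s₂', t₂', hs₂', h₂', e₂⟩ := exists_vecMulVec_eq_of_dotProduct_self_eq_zero h₂ t₂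
  refine ⟨s₁', t₁', t₂', s₂', hs₁', hs₂', h₁', h₂', ?_⟩
  rw [e₁, ← transpose_vecMulVec s₂, e₂, transpose_vecMulVec]

theorem stmt_4 (S : Matrix (Fin 3) (Fin 3) ℂ) :
    IsTrifocalEssential S ↔
      S.det = 0 ∧ (S * Sᵀ).trace ^ 2 - 2 * ((S * Sᵀ) * (S * Sᵀ)).trace = 0 := by
  constructor
  · rintro ⟨s₁, t₁, t₂, s₂, -, -, h₁, h₂, hS⟩
    refine ⟨hS ▸ det_vecMulVec_add_vecMulVec s₁ t₁ t₂ s₂, ?_⟩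
    rw [trace_sq_sub_two_mul_trace_sq_vecMulVec_add hS, h₁, h₂]
    simp [binaryQuadResultant]
  · rintro ⟨hdet, htr⟩
    obtain ⟨u₁, v₁, u₂, v₂, hS⟩ := exists_eq_vecMulVec_add_vecMulVec_of_det_eq_zero hdet
    rw [trace_sq_sub_two_mul_trace_sq_vecMulVec_add hS, neg_eq_zero] at htr
    obtain ⟨α, β, hαβ, h₁, h₂⟩ := exists_common_root_of_binaryQuadResultant_eq_zero htr
    obtain ⟨γ, δ, hαδβγ⟩ := exists_mul_sub_mul_eq_one hαβ
    rw [hS, vecMulVec_add_vecMulVec_eq_of_mul_sub_mul_eq_one u₁ u₂ v₁ v₂ hαδβγ]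
    refine isTrifocalEssential_iff_exists.mpr ⟨_, _, _, _, ?_, ?_, rfl⟩
    · rw [smul_add_smul_dotProduct_self]
      linear_combination h₁
    · rw [sub_eq_add_neg, ← neg_smul, smul_add_smul_dotProduct_self, dotProduct_comm v₂ v₁]
      linear_combination h₂
end

section
/- A 3×3 complex matrix S is a trifocal essential matrix if and only if (trace(S Sᵀ) I − 2 S Sᵀ)² S = 0 (the 3×3 zero matrix). -/
open Matrix

/-!
For `S = s₁t₁ᵀ + t₂s₂ᵀ` with `s₁, s₂` isotropic, `T = tr(SSᵀ) I - 2 SSᵀ` kills `s₁` and maps `t₂`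
into the line of `s₁`, so `T²S = 0`.

Conversely, put `N = SᵀS` and `D = tr(N) I - 2N`. Since `D Sᵀ = Sᵀ T`, the hypothesis gives
`D²N = 0`. From this one finds a nonzero isotropic `s₂` such that `x ⬝ᵥ N y = 0` on `s₂^⊥`:
if `tr N ≠ 0`, take `s₂` isotropic in `ker D` (the `tr N / 2`-eigenspace), and `s₂^⊥` is spanned by
`s₂` and a vector of `ker N`; if `tr N = 0`, then `N³ = 0` and `s₂` spans the image of `N²`
(or of `N`). Then `S` maps `s₂^⊥` into a totally isotropic subspace of `ℂ³`, which lies on an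
isotropic line `ℂ s₁`; splitting off `e` with `s₂ ⬝ᵥ e = 1` gives `S = s₁t₁ᵀ + (S e) s₂ᵀ`.
-/

section Field
variable {K : Type*} [Field K] {a b s k y : Fin 3 → K}

theorem exists_eq_smul_of_cross_eq_zero (ha : a ≠ 0) (h : a ⨯₃ b = 0) : ∃ c : K, b = c • a := by
  have : ¬LinearIndependent K ![b, a] := by
    rw [← crossProduct_ne_zero_iff_linearIndependent, ← cross_anticomm, h, neg_zero, not_not]
  rw [linearIndependent_fin2] at this
  push Not at this
  obtain ⟨c, hc⟩ := this (by simpa using ha)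
  exact ⟨c, by simpa using hc.symm⟩

theorem exists_eq_smul_of_isotropic_orthogonal (ha : a ≠ 0) (haa : a ⬝ᵥ a = 0)
    (hbb : b ⬝ᵥ b = 0) (hab : a ⬝ᵥ b = 0) : ∃ c : K, b = c • a := by
  have hw : a ⨯₃ (a ⨯₃ b) = 0 := by
    rw [cross_cross_eq_smul_sub_smul', hab, haa, zero_smul, zero_smul, sub_zero]
  obtain ⟨c, hc⟩ := exists_eq_smul_of_cross_eq_zero ha hw
  have hbw : b ⨯₃ (a ⨯₃ b) = 0 := by
    rw [cross_cross_eq_smul_sub_smul', hbb, hab, zero_smul, zero_smul, sub_zero]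
  have hc0 : c = 0 := by
    rw [hc, map_smul, ← cross_anticomm, hc, smul_neg, smul_smul, neg_eq_zero,
      smul_eq_zero] at hbw
    simpa [ha] using hbw
  rw [hc0, zero_smul] at hc
  exact exists_eq_smul_of_cross_eq_zero ha hc

theorem exists_eq_smul_add_smul_of_dotProduct_eq_zero (hs : s ≠ 0) (hss : s ⬝ᵥ s = 0)
    (hsk : s ⬝ᵥ k = 0) (hk : s ⨯₃ k ≠ 0) (hy : s ⬝ᵥ y = 0) :
    ∃ α β : K, y = α • s + β • k := by
  have cross_eq_smul {v : Fin 3 → K} (hv : s ⬝ᵥ v = 0) : ∃ c : K, s ⨯₃ v = c • s :=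
    exists_eq_smul_of_isotropic_orthogonal hs hss
      (by rw [cross_dot_cross, hss, hv]; ring) (dot_self_cross s v)
  obtain ⟨γ, hγ⟩ := cross_eq_smul hsk
  obtain ⟨δ, hδ⟩ := cross_eq_smul hy
  have hγ0 : γ ≠ 0 := by rintro rfl; exact hk (by rw [hγ, zero_smul])
  obtain ⟨α, hα⟩ : ∃ α : K, y - (δ / γ) • k = α • s := by
    refine exists_eq_smul_of_cross_eq_zero hs ?_
    rw [map_sub, map_smul, hγ, hδ, smul_smul, div_mul_cancel₀ δ hγ0, sub_self]
  exact ⟨α, δ / γ, by rw [← hα, sub_add_cancel]⟩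

end Field

theorem exists_isotropic_orthogonal (w : Fin 3 → ℂ) :
    ∃ s : Fin 3 → ℂ, s ≠ 0 ∧ s ⬝ᵥ s = 0 ∧ s ⬝ᵥ w = 0 := by
  by_cases hww : w ⬝ᵥ w = 0
  · by_cases hw : w = 0
    · refine ⟨![1, Complex.I, 0], fun h => by simpa using congrFun h 0, ?_, by simp [hw]⟩
      simp [dotProduct, Fin.sum_univ_three]
    · exact ⟨w, hw, hww, hww⟩
  obtain ⟨p, hp, hwp⟩ : ∃ p : Fin 3 → ℂ, p ≠ 0 ∧ of ![w, 0, 0] *ᵥ p = 0 :=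
    exists_mulVec_eq_zero_iff.mpr (det_eq_zero_of_row_eq_zero 1 fun _ => rfl)
  replace hwp : w ⬝ᵥ p = 0 := by simpa using congrFun hwp 0
  by_cases hpp : p ⬝ᵥ p = 0
  · exact ⟨p, hp, hpp, by rw [dotProduct_comm, hwp]⟩
  -- `(w ⨯₃ p) ⬝ᵥ (w ⨯₃ p) = (w ⬝ᵥ w) (p ⬝ᵥ p)`, so `α • p + w ⨯₃ p` is isotropic when
  -- `α² = -(w ⬝ᵥ w)`.
  obtain ⟨α, hα⟩ := IsAlgClosed.exists_pow_nat_eq (-(w ⬝ᵥ w)) two_pos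
  refine ⟨α • p + w ⨯₃ p, fun h => ?_, ?_, ?_⟩
  · have : α * (p ⬝ᵥ p) = 0 := by
      simpa [dotProduct_add, dot_cross_self] using congrArg (p ⬝ᵥ ·) h
    obtain rfl : α = 0 := by simpa [hpp] using this
    exact hww (by linear_combination hα)
  · simp only [dotProduct_add, add_dotProduct, dotProduct_smul, smul_dotProduct, smul_eq_mul,
      dot_cross_self, cross_dot_cross, hwp]
    rw [dotProduct_comm (w ⨯₃ p) p, dot_cross_self]
    linear_combination (p ⬝ᵥ p) * hα
  · simp [dotProduct_comm _ w, hwp]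

theorem exists_eq_vecMulVec_of_transpose_mul_self_eq_zero {M : Matrix (Fin 3) (Fin 3) ℂ}
    (h : Mᵀ * M = 0) : ∃ s t : Fin 3 → ℂ, s ≠ 0 ∧ s ⬝ᵥ s = 0 ∧ M = vecMulVec s t := by
  by_cases hM : M = 0
  · obtain ⟨s, hs, hss, -⟩ := exists_isotropic_orthogonal 0
    exact ⟨s, 0, hs, hss, by simp [hM]⟩
  obtain ⟨j, hj⟩ : ∃ j, Mᵀ j ≠ 0 := by
    by_contra! h
    exact hM (by ext i j; simpa using congrFun (h j) i)
  have hcol (i j : Fin 3) : Mᵀ i ⬝ᵥ Mᵀ j = 0 := by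
    simpa [mul_apply, dotProduct] using congrFun (congrFun h i) j
  choose c hc using fun i => exists_eq_smul_of_isotropic_orthogonal hj (hcol j j) (hcol i i)
    (hcol j i)
  refine ⟨Mᵀ j, c, hj, hcol j j, ?_⟩
  ext i k
  simpa [vecMulVec_apply, mul_comm] using congrFun (hc k) i

theorem two_smul_adjugate_eq {R : Type*} [CommRing R] (A : Matrix (Fin 3) (Fin 3) R) :
    (2 : R) • A.adjugate =
      (2 : R) • A ^ 2 - (2 * A.trace) • A + (A.trace ^ 2 - (A ^ 2).trace) • 1 := by
  ext i j
  fin_cases i <;> fin_cases j <;>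
    simp [adjugate_fin_three, trace_fin_three, sq, mul_apply, Fin.sum_univ_three] <;> ring

theorem cross_eq_zero_of_adjugate_eq_zero {R : Type*} [CommRing R]
    {A : Matrix (Fin 3) (Fin 3) R} (h : A.adjugate = 0) (i j : Fin 3) : A i ⨯₃ A j = 0 := by
  rw [adjugate_fin_three, ← Matrix.ext_iff] at h
  simp only [Fin.forall_fin_succ] at h
  fin_cases i <;> fin_cases j <;> ext k <;> fin_cases k <;>
    simp [cross_apply] at h ⊢ <;> grind

theorem exists_isotropic_mulVec_eq_zero_of_adjugate_eq_zero {A : Matrix (Fin 3) (Fin 3) ℂ}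
    (h : A.adjugate = 0) : ∃ s : Fin 3 → ℂ, s ≠ 0 ∧ s ⬝ᵥ s = 0 ∧ A *ᵥ s = 0 := by
  by_cases hA : A = 0
  · obtain ⟨s, hs, hss, -⟩ := exists_isotropic_orthogonal 0
    exact ⟨s, hs, hss, by simp [hA]⟩
  obtain ⟨i, hi⟩ : ∃ i, A i ≠ 0 := by
    by_contra! h
    exact hA (funext h)
  choose c hc using fun j => exists_eq_smul_of_cross_eq_zero hi
    (cross_eq_zero_of_adjugate_eq_zero h i j)
  obtain ⟨s, hs, hss, his⟩ := exists_isotropic_orthogonal (A i)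
  refine ⟨s, hs, hss, funext fun j => ?_⟩
  rw [mulVec, hc j, smul_dotProduct, dotProduct_comm, his, smul_zero, Pi.zero_apply]

theorem Matrix.IsSymm.dotProduct_mulVec_comm {R n : Type*} [CommSemiring R] [Fintype n]
    {N : Matrix n n R} (hN : N.IsSymm) (x y : n → R) : x ⬝ᵥ N *ᵥ y = y ⬝ᵥ N *ᵥ x := by
  rw [dotProduct_mulVec, ← hN.eq, vecMul_transpose, dotProduct_comm, hN.eq]

def OrthIsTotallyIsotropic {R n : Type*} [CommSemiring R] [Fintype n] (N : Matrix n n R)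
    (s : n → R) : Prop :=
  ∀ x y, s ⬝ᵥ x = 0 → s ⬝ᵥ y = 0 → x ⬝ᵥ N *ᵥ y = 0

theorem orthIsTotallyIsotropic_of_span {K : Type*} [Field K] {N : Matrix (Fin 3) (Fin 3) K}
    {s k : Fin 3 → K} (hN : N.IsSymm) (hs : s ≠ 0) (hss : s ⬝ᵥ s = 0) (hsk : s ⬝ᵥ k = 0)
    (hk : s ⨯₃ k ≠ 0) (h₁ : s ⬝ᵥ N *ᵥ s = 0) (h₂ : s ⬝ᵥ N *ᵥ k = 0)
    (h₃ : k ⬝ᵥ N *ᵥ k = 0) : OrthIsTotallyIsotropic N s := by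
  have h₂' : k ⬝ᵥ N *ᵥ s = 0 := by
    rw [hN.dotProduct_mulVec_comm, h₂]
  intro x y hx hy
  obtain ⟨a, b, rfl⟩ := exists_eq_smul_add_smul_of_dotProduct_eq_zero hs hss hsk hk hx
  obtain ⟨c, d, rfl⟩ := exists_eq_smul_add_smul_of_dotProduct_eq_zero hs hss hsk hk hy
  simp [mulVec_add, mulVec_smul, dotProduct_add, add_dotProduct, h₁, h₂, h₂', h₃]

def traceReflect (N : Matrix (Fin 3) (Fin 3) ℂ) : Matrix (Fin 3) (Fin 3) ℂ :=
  N.trace • 1 - (2 : ℂ) • N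

theorem trace_traceReflect (N : Matrix (Fin 3) (Fin 3) ℂ) : (traceReflect N).trace = N.trace := by
  simp only [traceReflect, trace_sub, trace_smul, trace_one, Fintype.card_fin, smul_eq_mul]
  push_cast
  ring

section Symmetric
variable {N : Matrix (Fin 3) (Fin 3) ℂ}

theorem Matrix.IsSymm.traceReflect (hN : N.IsSymm) : (traceReflect N).IsSymm :=
  (isSymm_one.smul _).sub (hN.smul _)

theorem det_eq_zero_of_traceReflect_sq_mul_eq_zero (hσ : N.trace ≠ 0)
    (h : traceReflect N ^ 2 * N = 0) : N.det = 0 := by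
  by_contra hdet
  have hunit : IsUnit N := (isUnit_iff_isUnit_det N).mpr (isUnit_iff_ne_zero.mpr hdet)
  have hnil : IsNilpotent (traceReflect N) := ⟨2, (hunit.mul_left_eq_zero).mp h⟩
  exact hσ (by rw [← trace_traceReflect, (isNilpotent_trace_of_isNilpotent hnil).eq_zero])

theorem exists_isotropic_mulVec_traceReflect_eq_zero (hN : N.IsSymm)
    (h : traceReflect N ^ 2 * N = 0) :
    ∃ s : Fin 3 → ℂ, s ≠ 0 ∧ s ⬝ᵥ s = 0 ∧ traceReflect N *ᵥ s = 0 := by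
  set D := traceReflect N
  -- If `D N = 0` then `D² = (tr N) D`, and the adjugate formula gives `adj D = 0`. Otherwise the
  -- columns of the symmetric square-zero matrix `D N` are isotropic and killed by `D`.
  by_cases hDN : D * N = 0
  · apply exists_isotropic_mulVec_eq_zero_of_adjugate_eq_zero
    have hDD : D ^ 2 = N.trace • D :=
      calc D ^ 2 = D * (N.trace • 1 - (2 : ℂ) • N) := sq D
        _ = N.trace • D := by
          rw [Matrix.mul_sub, Matrix.mul_smul, Matrix.mul_smul, hDN, Matrix.mul_one, smul_zero,
            sub_zero]
    have := two_smul_adjugate_eq D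
    rw [hDD, trace_smul, trace_traceReflect, smul_eq_mul, smul_smul] at this
    simpa [sq] using this
  · obtain ⟨s, t, hs, hss, hst⟩ := exists_eq_vecMulVec_of_transpose_mul_self_eq_zero
      (M := D * N) (by rw [transpose_mul, hN.eq, hN.traceReflect.eq, Matrix.mul_assoc,
        ← Matrix.mul_assoc D, ← sq, h, Matrix.mul_zero])
    refine ⟨s, hs, hss, ?_⟩
    have hDDN : D * (D * N) = 0 := by rw [← Matrix.mul_assoc, ← sq, h]
    rw [hst, mul_vecMulVec, vecMulVec_eq_zero] at hDDN
    exact hDDN.resolve_right (by rintro rfl; exact hDN (by simp [hst]))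

theorem exists_orthIsTotallyIsotropic_of_trace_ne_zero (hN : N.IsSymm) (hσ : N.trace ≠ 0)
    (h : traceReflect N ^ 2 * N = 0) :
    ∃ s : Fin 3 → ℂ, s ≠ 0 ∧ s ⬝ᵥ s = 0 ∧ OrthIsTotallyIsotropic N s := by
  obtain ⟨s, hs, hss, hDs⟩ := exists_isotropic_mulVec_traceReflect_eq_zero hN h
  obtain ⟨k, hk, hNk⟩ := exists_mulVec_eq_zero_iff.mpr
    (det_eq_zero_of_traceReflect_sq_mul_eq_zero hσ h)
  have hNs : N *ᵥ s = (N.trace / 2) • s := by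
    rw [traceReflect, sub_mulVec, smul_mulVec, smul_mulVec, one_mulVec, sub_eq_zero] at hDs
    rw [div_eq_inv_mul, ← smul_smul, hDs, smul_smul, inv_mul_cancel₀ two_ne_zero, one_smul]
  have hσ2 : N.trace / 2 ≠ 0 := div_ne_zero hσ two_ne_zero
  have hsk : s ⬝ᵥ k = 0 := by
    have : N.trace / 2 * (s ⬝ᵥ k) = 0 := by
      rw [← smul_eq_mul, ← smul_dotProduct, ← hNs, dotProduct_comm,
        hN.dotProduct_mulVec_comm, hNk, dotProduct_zero]
    simpa [hσ2] using this
  have hsk' : s ⨯₃ k ≠ 0 := by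
    intro h0
    obtain ⟨c, rfl⟩ := exists_eq_smul_of_cross_eq_zero hs h0
    rw [mulVec_smul, hNs, smul_smul, smul_eq_zero] at hNk
    simp_all
  refine ⟨s, hs, hss, orthIsTotallyIsotropic_of_span hN hs hss hsk hsk' ?_ ?_ ?_⟩
  · rw [hNs, dotProduct_smul, hss, smul_zero]
  · rw [hNk, dotProduct_zero]
  · rw [hNk, dotProduct_zero]

theorem exists_orthIsTotallyIsotropic_of_pow_three_eq_zero (hN : N.IsSymm) (h : N ^ 3 = 0) :
    ∃ s : Fin 3 → ℂ, s ≠ 0 ∧ s ⬝ᵥ s = 0 ∧ OrthIsTotallyIsotropic N s := by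
  by_cases hN2 : N ^ 2 = 0
  · obtain ⟨s, t, hs, hss, hst⟩ := exists_eq_vecMulVec_of_transpose_mul_self_eq_zero
      (by rw [hN.eq, ← sq, hN2])
    refine ⟨s, hs, hss, fun x y hx _ => ?_⟩
    simp [hst, vecMulVec_mulVec, dotProduct_comm x, hx]
  have hdot (a b : ℕ) (x : Fin 3 → ℂ) : N ^ a *ᵥ x ⬝ᵥ N ^ b *ᵥ x = x ⬝ᵥ N ^ (a + b) *ᵥ x := by
    rw [pow_add, ← mulVec_mulVec, dotProduct_mulVec x, ← vecMul_transpose, (hN.pow a).eq]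
  have hvanish (a b : ℕ) (x : Fin 3 → ℂ) (hab : 3 ≤ a + b) : N ^ a *ᵥ x ⬝ᵥ N ^ b *ᵥ x = 0 := by
    rw [hdot, pow_eq_zero_of_le hab h, zero_mulVec, dotProduct_zero]
  have hsucc (a : ℕ) (x : Fin 3 → ℂ) : N *ᵥ N ^ a *ᵥ x = N ^ (a + 1) *ᵥ x := by
    rw [mulVec_mulVec, pow_succ']
  obtain ⟨j, hj⟩ : ∃ j, N ^ 2 *ᵥ Pi.single j 1 ≠ 0 := by
    by_contra! hj
    exact hN2 (by ext i k; simpa using congrFun (hj k) i)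
  set e : Fin 3 → ℂ := Pi.single j 1
  -- `N²e` and `Ne` span `(N²e)^⊥`, and every pairing `N^a e ⬝ᵥ N^b e` with `a + b ≥ 3` vanishes.
  have hcross : (N ^ 2 *ᵥ e) ⨯₃ (N ^ 1 *ᵥ e) ≠ 0 := by
    intro h0
    obtain ⟨c, hc⟩ := exists_eq_smul_of_cross_eq_zero hj h0
    apply hj
    rw [← hsucc, hc, mulVec_smul, hsucc, pow_eq_zero_of_le le_rfl h, zero_mulVec, smul_zero]
  refine ⟨_, hj, hvanish 2 2 e (by norm_num), orthIsTotallyIsotropic_of_span hN hj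
    (hvanish 2 2 e (by norm_num)) (hvanish 2 1 e (by norm_num)) hcross ?_ ?_ ?_⟩
  · rw [hsucc]; exact hvanish 2 3 e (by norm_num)
  · rw [hsucc]; exact hvanish 2 2 e (by norm_num)
  · rw [hsucc]; exact hvanish 1 2 e (by norm_num)

theorem exists_orthIsTotallyIsotropic_of_traceReflect_sq_mul_eq_zero (hN : N.IsSymm)
    (h : traceReflect N ^ 2 * N = 0) :
    ∃ s : Fin 3 → ℂ, s ≠ 0 ∧ s ⬝ᵥ s = 0 ∧ OrthIsTotallyIsotropic N s := by
  by_cases hσ : N.trace = 0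
  · refine exists_orthIsTotallyIsotropic_of_pow_three_eq_zero hN ?_
    rw [traceReflect, hσ, zero_smul, zero_sub, neg_sq, smul_pow, smul_mul_assoc, ← pow_succ,
      smul_eq_zero] at h
    exact h.resolve_left (by norm_num)
  · exact exists_orthIsTotallyIsotropic_of_trace_ne_zero hN hσ h

end Symmetric

theorem isTrifocalEssential_of_orthIsTotallyIsotropic {S : Matrix (Fin 3) (Fin 3) ℂ}
    {s₂ : Fin 3 → ℂ} (hs₂ : s₂ ≠ 0) (hss : s₂ ⬝ᵥ s₂ = 0)
    (h : OrthIsTotallyIsotropic (Sᵀ * S) s₂) : IsTrifocalEssential S := by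
  obtain ⟨i, hi⟩ : ∃ i, s₂ i ≠ 0 := by
    by_contra! h
    exact hs₂ (funext h)
  set e : Fin 3 → ℂ := (s₂ i)⁻¹ • Pi.single i 1
  have he : s₂ ⬝ᵥ e = 1 := by simp [e, hi]
  set P : Matrix (Fin 3) (Fin 3) ℂ := 1 - vecMulVec e s₂
  have hP : s₂ ᵥ* P = 0 := by
    rw [vecMul_sub, vecMul_one, vecMul_vecMulVec, he, one_smul, sub_self]
  obtain ⟨s₁, t₁, hs₁, hs₁s₁, hR⟩ := exists_eq_vecMulVec_of_transpose_mul_self_eq_zero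
    (M := S * P) (by
      rw [transpose_mul, Matrix.mul_assoc, ← Matrix.mul_assoc Sᵀ, ← Matrix.mul_assoc]
      ext j k
      rw [mul_mul_apply, Matrix.zero_apply]
      exact h _ _ (congrFun hP j) (congrFun hP k))
  refine ⟨s₁, t₁, S *ᵥ e, s₂, hs₁, hs₂, hs₁s₁, hss, ?_⟩
  rw [← hR, ← mul_vecMulVec, ← Matrix.mul_add, sub_add_cancel, Matrix.mul_one]

theorem traceReflect_sq_mul_transpose_mul_self_eq_zero {S : Matrix (Fin 3) (Fin 3) ℂ}
    (h : traceReflect (S * Sᵀ) ^ 2 * S = 0) :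
    traceReflect (Sᵀ * S) ^ 2 * (Sᵀ * S) = 0 := by
  have hconj : SemiconjBy Sᵀ (traceReflect (S * Sᵀ)) (traceReflect (Sᵀ * S)) := by
    simp only [SemiconjBy, traceReflect, trace_mul_comm Sᵀ S, Matrix.mul_sub, Matrix.sub_mul,
      Matrix.mul_smul, Matrix.smul_mul, Matrix.mul_one, Matrix.one_mul, Matrix.mul_assoc]
  rw [← Matrix.mul_assoc, ← (hconj.pow_right 2).eq, Matrix.mul_assoc, h, Matrix.mul_zero]

theorem traceReflect_sq_mul_eq_zero_of_eq_vecMulVec_add_vecMulVec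
    {S : Matrix (Fin 3) (Fin 3) ℂ} {s₁ t₁ t₂ s₂ : Fin 3 → ℂ} (h₁ : s₁ ⬝ᵥ s₁ = 0)
    (h₂ : s₂ ⬝ᵥ s₂ = 0) (hS : S = vecMulVec s₁ t₁ + vecMulVec t₂ s₂) :
    traceReflect (S * Sᵀ) ^ 2 * S = 0 := by
  have hSv (x : Fin 3 → ℂ) : S *ᵥ x = (t₁ ⬝ᵥ x) • s₁ + (s₂ ⬝ᵥ x) • t₂ := by
    simp [hS, add_mulVec, vecMulVec_mulVec]
  have hSTv (x : Fin 3 → ℂ) : Sᵀ *ᵥ x = (s₁ ⬝ᵥ x) • t₁ + (t₂ ⬝ᵥ x) • s₂ := by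
    simp [hS, add_mulVec, vecMulVec_mulVec]
  have htr : (S * Sᵀ).trace = 2 * ((t₁ ⬝ᵥ s₂) * (s₁ ⬝ᵥ t₂)) := by
    simp [hS, Matrix.add_mul, Matrix.mul_add, vecMulVec_mul_vecMulVec, h₁, h₂,
      dotProduct_comm t₂ s₁, dotProduct_comm s₂ t₁]
    ring
  have hT (v : Fin 3 → ℂ) :
      traceReflect (S * Sᵀ) *ᵥ v = (S * Sᵀ).trace • v - (2 : ℂ) • (S *ᵥ Sᵀ *ᵥ v) := by
    rw [traceReflect, sub_mulVec, smul_mulVec, smul_mulVec, one_mulVec, mulVec_mulVec]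
  have hTs₁ : traceReflect (S * Sᵀ) *ᵥ s₁ = 0 := by
    rw [hT, hSTv, hSv, htr]
    simp [h₁, h₂, dotProduct_comm t₂ s₁]
    module
  have hTt₂ : traceReflect (S * Sᵀ) *ᵥ t₂ =
      (-2 * ((t₁ ⬝ᵥ t₁) * (s₁ ⬝ᵥ t₂) + (t₂ ⬝ᵥ t₂) * (t₁ ⬝ᵥ s₂))) • s₁ := by
    rw [hT, hSTv, hSv, htr]
    simp [h₂, dotProduct_comm s₂ t₁]
    module
  rw [ext_iff_mulVec]
  intro x
  rw [zero_mulVec, ← mulVec_mulVec, hSv, sq, ← mulVec_mulVec]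
  simp [mulVec_add, mulVec_smul, mulVec_neg, hTs₁, hTt₂]

theorem stmt_6 (S : Matrix (Fin 3) (Fin 3) ℂ) :
    IsTrifocalEssential S ↔
      ((S * Sᵀ).trace • (1 : Matrix (Fin 3) (Fin 3) ℂ) - (2 : ℂ) • (S * Sᵀ)) ^ 2 * S = 0 := by
  constructor
  · rintro ⟨s₁, t₁, t₂, s₂, -, -, h₁, h₂, hS⟩
    exact traceReflect_sq_mul_eq_zero_of_eq_vecMulVec_add_vecMulVec h₁ h₂ hS
  · intro h
    obtain ⟨s, hs, hss, hS⟩ := exists_orthIsTotallyIsotropic_of_traceReflect_sq_mul_eq_zero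
      (isSymm_transpose_mul_self S) (traceReflect_sq_mul_transpose_mul_self_eq_zero h)
    exact isTrifocalEssential_of_orthIsTotallyIsotropic hs hss hS
end

section
/- If a 3×3 complex matrix S satisfies (trace(S Sᵀ) I − 2 S Sᵀ)² S = 0 and S is invertible, then a contradiction follows; hence det S = 0. -/
/-!
With `A = S Sᵀ` and `M = tr(A) I - 2A`, invertibility of `S` turns `M² S = 0` into `M² = 0`.
A nilpotent matrix has trace zero and `tr M = (3 - 2) tr A`, so `tr A = 0` and `M = -2A`.
Then `A` is singular, i.e. `(det S)² = 0`.
-/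

open Matrix

namespace Matrix

variable {n R : Type*} [Fintype n] [DecidableEq n] [CommRing R]

theorem det_eq_zero_of_isNilpotent [IsReduced R] [Nonempty n]
    {M : Matrix n n R} (hM : IsNilpotent M) : M.det = 0 := by
  obtain ⟨k, hk⟩ := hM
  exact IsNilpotent.eq_zero ⟨k, by rw [← det_pow, hk, det_zero]⟩

theorem trace_trace_smul_one_sub_two_smul (A : Matrix n n R) :
    (A.trace • (1 : Matrix n n R) - (2 : R) • A).trace = (Fintype.card n - 2) * A.trace := by
  simp only [trace_sub, trace_smul, trace_one, smul_eq_mul]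
  ring

variable [IsDomain R] [CharZero R]

theorem trace_eq_zero_of_isNilpotent_trace_smul_one_sub_two_smul
    (hn : Fintype.card n ≠ 2) {A : Matrix n n R}
    (h : IsNilpotent (A.trace • (1 : Matrix n n R) - (2 : R) • A)) : A.trace = 0 := by
  have htrace := (isNilpotent_trace_of_isNilpotent h).eq_zero
  rw [trace_trace_smul_one_sub_two_smul] at htrace
  refine (mul_eq_zero.mp htrace).resolve_left ?_
  rw [sub_eq_zero]
  exact_mod_cast hn

theorem det_eq_zero_of_isNilpotent_trace_smul_one_sub_two_smul [Nonempty n]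
    (hn : Fintype.card n ≠ 2) {A : Matrix n n R}
    (h : IsNilpotent (A.trace • (1 : Matrix n n R) - (2 : R) • A)) : A.det = 0 := by
  have hdet := det_eq_zero_of_isNilpotent h
  rw [trace_eq_zero_of_isNilpotent_trace_smul_one_sub_two_smul hn h, zero_smul, zero_sub,
    det_neg, det_smul] at hdet
  simpa using hdet

end Matrix

theorem stmt_7 (S : Matrix (Fin 3) (Fin 3) ℂ)
    (h : ((S * Sᵀ).trace • (1 : Matrix (Fin 3) (Fin 3) ℂ) - (2 : ℂ) • (S * Sᵀ)) ^ 2 * S = 0) :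
    (IsUnit S → False) ∧ S.det = 0 := by
  have not_isUnit : ¬IsUnit S := fun hS => by
    have hsq := hS.mul_left_eq_zero.mp h
    have hdet := det_eq_zero_of_isNilpotent_trace_smul_one_sub_two_smul (by simp) ⟨2, hsq⟩
    rw [det_mul, det_transpose, mul_self_eq_zero] at hdet
    exact ((isUnit_iff_isUnit_det S).mp hS).ne_zero hdet
  refine ⟨not_isUnit, ?_⟩
  by_contra hdet
  exact not_isUnit ((isUnit_iff_isUnit_det S).mpr (Ne.isUnit hdet))
end

section
/- Every real trifocal essential matrix is an essential matrix: if a real 3×3 matrix S satisfies det S = 0 and trace(S Sᵀ)² − 2 trace((S Sᵀ)²) = 0, then S = [t]ₓ R for some t ∈ ℝ³ and R ∈ SO(3). -/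
/-!
Since `det S = 0` there are unit vectors `u`, `x` with `uᵀ S = 0` and `S x = 0`. On `u^⊥` the
symmetric matrix `M = S Sᵀ` has two eigenvalues whose sum `2τ` and sum of squares `2τ²` force
them to be equal, so `M = τ (1 - u uᵀ)`, which is `A Aᵀ` for `A = [√τ u]ₓ`.
As `A² = -τ (1 - u uᵀ)`, `B = -τ⁻¹ A S` satisfies `A B = S` and `B Bᵀ = 1 - u uᵀ`, and
`B ± u xᵀ` is orthogonal; the sign is chosen to make the determinant `1`.
-/

open Matrix

/-- The skew-symmetric matrix `[t]ₓ` of a 3-vector. -/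
def skew {R : Type*} [CommRing R] (t : Fin 3 → R) : Matrix (Fin 3) (Fin 3) R :=
  !![0, -t 2, t 1; t 2, 0, -t 0; -t 1, t 0, 0]

namespace Matrix

variable {n : Type*} [Fintype n]

section CommRing

variable {K : Type*} [CommRing K]

theorem one_sub_vecMulVec_mul_self [DecidableEq n] {u : n → K} (hu : u ⬝ᵥ u = 1) :
    (1 - vecMulVec u u) * (1 - vecMulVec u u) = 1 - vecMulVec u u := by
  rw [sub_mul, mul_sub, mul_sub, vecMulVec_mul_vecMulVec, hu, one_smul]
  simp only [one_mul, mul_one]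
  abel

theorem det_one_sub_two_smul_vecMulVec [DecidableEq n] {x : n → K} (hx : x ⬝ᵥ x = 1) :
    (1 - (2 : K) • vecMulVec x x).det = -1 := by
  rw [sub_eq_add_neg, ← neg_smul, ← smul_vecMulVec, vecMulVec_eq Unit,
    det_one_add_replicateCol_mul_replicateRow, dotProduct_smul, hx]
  norm_num

theorem mul_transpose_add_smul_vecMulVec [DecidableEq n] {B : Matrix n n K} {u x : n → K}
    {s : K} (hB : B * Bᵀ = 1 - vecMulVec u u) (hx : x ⬝ᵥ x = 1) (hBx : B *ᵥ x = 0)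
    (hs : s * s = 1) :
    (B + s • vecMulVec u x) * (B + s • vecMulVec u x)ᵀ = 1 := by
  rw [transpose_add, transpose_smul, transpose_vecMulVec, add_mul, mul_add, mul_add,
    Matrix.mul_smul, Matrix.smul_mul, Matrix.smul_mul, Matrix.mul_smul, mul_vecMulVec,
    vecMulVec_mul, vecMul_transpose, hBx, vecMulVec_mul_vecMulVec, hx, hB, smul_smul, hs]
  simp

theorem add_vecMulVec_mul_householder [DecidableEq n] {B : Matrix n n K} {u x : n → K}
    (hx : x ⬝ᵥ x = 1) (hBx : B *ᵥ x = 0) :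
    (B + vecMulVec u x) * (1 - (2 : K) • vecMulVec x x) = B - vecMulVec u x := by
  rw [add_mul, mul_sub, mul_sub, Matrix.mul_smul, Matrix.mul_smul, mul_vecMulVec, hBx,
    vecMulVec_mul_vecMulVec, hx]
  simp only [mul_one, zero_vecMulVec, smul_zero, sub_zero, one_smul]
  rw [two_smul]
  abel

theorem exists_orthogonal_det_eq_one_eq_add_smul_vecMulVec [NoZeroDivisors K]
    [DecidableEq n] {B : Matrix n n K} {u x : n → K} (hB : B * Bᵀ = 1 - vecMulVec u u)
    (hx : x ⬝ᵥ x = 1) (hBx : B *ᵥ x = 0) :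
    ∃ R : Matrix n n K, R * Rᵀ = 1 ∧ R.det = 1 ∧ ∃ s : K, R = B + s • vecMulVec u x := by
  have horth (s : K) (hs : s * s = 1) := mul_transpose_add_smul_vecMulVec hB hx hBx hs
  have hdet : (B + vecMulVec u x).det * (B + vecMulVec u x).det = 1 := by
    simpa only [one_smul, det_mul, det_transpose, det_one] using
      congrArg det (horth 1 (one_mul 1))
  obtain h | h := mul_self_eq_one_iff.mp hdet
  · exact ⟨_, horth 1 (one_mul 1), by rwa [one_smul], 1, rfl⟩
  · refine ⟨_, horth (-1) (by ring), ?_, -1, rfl⟩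
    rw [neg_one_smul, ← sub_eq_add_neg, ← add_vecMulVec_mul_householder hx hBx, det_mul, h,
      det_one_sub_two_smul_vecMulVec hx]
    ring

end CommRing

-- `A² = -A Aᵀ = -τ P` inverts `A` on the range of `P`, which contains that of `S`.
theorem exists_mul_eq_mul_transpose_eq {K : Type*} [Field K] {A S P : Matrix n n K} {τ : K}
    {x : n → K} (hτ : τ ≠ 0) (hA : Aᵀ = -A) (hAA : A * Aᵀ = τ • P) (hSS : S * Sᵀ = τ • P)
    (hPP : P * P = P) (hPS : P * S = S) (hSx : S *ᵥ x = 0) :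
    ∃ B : Matrix n n K, A * B = S ∧ B * Bᵀ = P ∧ B *ᵥ x = 0 := by
  have hsq : A * A = -(τ • P) := by rw [← hAA, hA, Matrix.mul_neg, neg_neg]
  refine ⟨(-τ⁻¹) • (A * S), ?_, ?_, ?_⟩
  · rw [Matrix.mul_smul, ← Matrix.mul_assoc, hsq, Matrix.neg_mul, Matrix.smul_mul, hPS,
      smul_neg, smul_smul, neg_mul, neg_smul, neg_neg, inv_mul_cancel₀ hτ, one_smul]
  · have hASSA : A * S * (A * S)ᵀ = (A * A) * (A * A) := by
      rw [transpose_mul, Matrix.mul_assoc, ← Matrix.mul_assoc S, hSS, ← hAA, hA]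
      noncomm_ring
    rw [transpose_smul, Matrix.smul_mul, Matrix.mul_smul, smul_smul, hASSA, hsq, neg_mul_neg,
      neg_mul_neg, Matrix.smul_mul, Matrix.mul_smul, hPP, smul_smul, smul_smul,
      show τ⁻¹ * τ⁻¹ * τ * τ = 1 by field_simp, one_smul]
  · rw [smul_mulVec, ← mulVec_mulVec, hSx, mulVec_zero, smul_zero]

section Real

theorem exists_dotProduct_smul_self_eq_one {v : n → ℝ} (hv : v ≠ 0) :
    ∃ c : ℝ, (c • v) ⬝ᵥ (c • v) = 1 := by
  have hpos : 0 < v ⬝ᵥ v := by simpa using dotProduct_star_self_pos_iff.mpr hv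
  refine ⟨(√(v ⬝ᵥ v))⁻¹, ?_⟩
  rw [smul_dotProduct, dotProduct_smul, smul_eq_mul, smul_eq_mul, ← mul_assoc, ← mul_inv,
    Real.mul_self_sqrt hpos.le, inv_mul_cancel₀ hpos.ne']

theorem exists_dotProduct_self_eq_one_mulVec_eq_zero [DecidableEq n] {A : Matrix n n ℝ}
    (h : A.det = 0) : ∃ x, x ⬝ᵥ x = 1 ∧ A *ᵥ x = 0 := by
  obtain ⟨v, hv, hAv⟩ := exists_mulVec_eq_zero_iff.mpr h
  obtain ⟨c, hc⟩ := exists_dotProduct_smul_self_eq_one hv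
  exact ⟨c • v, hc, by rw [mulVec_smul, hAv, smul_zero]⟩

theorem exists_dotProduct_self_eq_one_vecMul_eq_zero [DecidableEq n] {A : Matrix n n ℝ}
    (h : A.det = 0) : ∃ u, u ⬝ᵥ u = 1 ∧ u ᵥ* A = 0 := by
  simpa only [mulVec_transpose] using
    exists_dotProduct_self_eq_one_mulVec_eq_zero (A := Aᵀ) (by rwa [det_transpose])

-- `N = M - σ P` is symmetric with `tr (N Nᵀ) = tr (M²) - 2σ tr M + σ² tr P = 0`.
theorem eq_smul_one_sub_vecMulVec [DecidableEq n] {M : Matrix n n ℝ} {u : n → ℝ} {σ : ℝ}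
    (hM : Mᵀ = M) (hu : u ⬝ᵥ u = 1) (hMu : M *ᵥ u = 0)
    (htr : M.trace = (Fintype.card n - 1) * σ)
    (htr2 : (M * M).trace = (Fintype.card n - 1) * σ ^ 2) :
    M = σ • (1 - vecMulVec u u) := by
  set P := 1 - vecMulVec u u
  have hPT : Pᵀ = P := by rw [transpose_sub, transpose_one, transpose_vecMulVec]
  have hMP : M * P = M := by
    rw [mul_sub, mul_one, mul_vecMulVec, hMu, zero_vecMulVec, sub_zero]
  have hPM : P * M = M := by simpa only [transpose_mul, hM, hPT] using congrArg transpose hMP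
  have hNT : (M - σ • P)ᵀ = M - σ • P := by rw [transpose_sub, transpose_smul, hM, hPT]
  have hNN : (M - σ • P) * (M - σ • P) = M * M - (2 * σ) • M + σ ^ 2 • P := by
    rw [sub_mul, mul_sub, mul_sub, Matrix.smul_mul, Matrix.mul_smul, Matrix.smul_mul,
      Matrix.mul_smul, hMP, hPM, one_sub_vecMulVec_mul_self hu, smul_smul]
    module
  have hN : M - σ • P = 0 := by
    rw [← trace_mul_conjTranspose_self_eq_zero_iff, conjTranspose_eq_transpose_of_trivial, hNT,
      hNN]
    simp only [trace_add, trace_sub, trace_smul, trace_one, trace_vecMulVec, htr, htr2, hu,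
      smul_eq_mul, P]
    ring
  exact sub_eq_zero.mp hN

end Real

end Matrix

section Skew

variable {R : Type*} [CommRing R]

@[simp]
theorem skew_zero : skew (0 : Fin 3 → R) = 0 := by
  ext i j; fin_cases i <;> fin_cases j <;> simp [skew]

theorem skew_smul (c : R) (t : Fin 3 → R) : skew (c • t) = c • skew t := by
  ext i j; fin_cases i <;> fin_cases j <;> simp [skew]

theorem skew_transpose (t : Fin 3 → R) : (skew t)ᵀ = -skew t := by
  ext i j; fin_cases i <;> fin_cases j <;> simp [skew]

theorem skew_mul_transpose (t : Fin 3 → R) :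
    skew t * (skew t)ᵀ = (t ⬝ᵥ t) • 1 - vecMulVec t t := by
  ext i j; fin_cases i <;> fin_cases j <;>
    simp [skew, mul_apply, Fin.sum_univ_three, dotProduct, vecMulVec_apply, one_apply] <;> ring

theorem skew_mulVec_self (t : Fin 3 → R) : skew t *ᵥ t = 0 := by
  ext i; fin_cases i <;> simp [skew, mulVec, dotProduct, Fin.sum_univ_three] <;> ring

end Skew

theorem exists_skew_mul_of_mul_transpose_eq {S : Matrix (Fin 3) (Fin 3) ℝ} {u x : Fin 3 → ℝ}
    {τ : ℝ} (hτ : 0 < τ) (hu : u ⬝ᵥ u = 1) (huS : u ᵥ* S = 0) (hx : x ⬝ᵥ x = 1)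
    (hSx : S *ᵥ x = 0) (hSS : S * Sᵀ = τ • (1 - vecMulVec u u)) :
    ∃ (t : Fin 3 → ℝ) (R : Matrix (Fin 3) (Fin 3) ℝ),
      R * Rᵀ = 1 ∧ R.det = 1 ∧ S = skew t * R := by
  have hAA : skew (√τ • u) * (skew (√τ • u))ᵀ = τ • (1 - vecMulVec u u) := by
    rw [skew_mul_transpose, smul_dotProduct, dotProduct_smul, hu, smul_vecMulVec,
      vecMulVec_smul, smul_smul, smul_smul, smul_eq_mul, mul_one, Real.mul_self_sqrt hτ.le,
      smul_sub]
  have hAu : skew (√τ • u) *ᵥ u = 0 := by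
    rw [skew_smul, smul_mulVec, skew_mulVec_self, smul_zero]
  have hPS : (1 - vecMulVec u u) * S = S := by
    rw [sub_mul, one_mul, vecMulVec_mul, huS, vecMulVec_zero, sub_zero]
  obtain ⟨B, hAB, hBB, hBx⟩ := exists_mul_eq_mul_transpose_eq hτ.ne' (skew_transpose _) hAA hSS
    (one_sub_vecMulVec_mul_self hu) hPS hSx
  obtain ⟨R, hRR, hR, s, rfl⟩ := exists_orthogonal_det_eq_one_eq_add_smul_vecMulVec hBB hx hBx
  refine ⟨√τ • u, _, hRR, hR, ?_⟩
  rw [mul_add, hAB, Matrix.mul_smul, mul_vecMulVec, hAu, zero_vecMulVec, smul_zero, add_zero]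

theorem stmt_9 (S : Matrix (Fin 3) (Fin 3) ℝ)
    (hdet : S.det = 0)
    (htr : (S * Sᵀ).trace ^ 2 - 2 * ((S * Sᵀ) * (S * Sᵀ)).trace = 0) :
    ∃ (t : Fin 3 → ℝ) (R : Matrix (Fin 3) (Fin 3) ℝ),
      R * Rᵀ = 1 ∧ R.det = 1 ∧ S = skew t * R := by
  obtain ⟨u, hu, huS⟩ := exists_dotProduct_self_eq_one_vecMul_eq_zero hdet
  obtain ⟨x, hx, hSx⟩ := exists_dotProduct_self_eq_one_mulVec_eq_zero hdet
  have hSS : S * Sᵀ = ((S * Sᵀ).trace / 2) • (1 - vecMulVec u u) := by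
    refine eq_smul_one_sub_vecMulVec (by rw [transpose_mul, transpose_transpose]) hu ?_ ?_ ?_
    · rw [← mulVec_mulVec, mulVec_transpose, huS, mulVec_zero]
    · rw [Fintype.card_fin]; ring
    · rw [Fintype.card_fin]; linear_combination (-1 / 2 : ℝ) * htr
  have htr_nonneg : 0 ≤ (S * Sᵀ).trace := by
    simpa only [conjTranspose_eq_transpose_of_trivial] using
      (posSemidef_self_mul_conjTranspose S).trace_nonneg
  obtain hpos | hzero := htr_nonneg.lt_or_eq
  · exact exists_skew_mul_of_mul_transpose_eq (half_pos hpos) hu huS hx hSx hSS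
  · have hS : S = 0 := by
      rw [← self_mul_conjTranspose_eq_zero, conjTranspose_eq_transpose_of_trivial, hSS, ← hzero,
        zero_div, zero_smul]
    exact ⟨0, 1, by simp, by simp, by simp [hS]⟩
end

section
/- Let Tₖ = A eₖ bᵀ − a eₖᵀ Bᵀ (k = 1,2,3) be the slices of a trifocal tensor, where A, B are 3×3 matrices and a, b ∈ ℝ³. Then for all scalars α, β, γ, det(α T₁ + β T₂ + γ T₃) = 0. -/
open Matrix

lemma aux_rank2_det (u b a w : Fin 3 → ℝ) :
    (vecMulVec u b - vecMulVec a w).det = 0 := by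
  simp [det_fin_three, vecMulVec_apply]
  ring

theorem stmt_12 (A B : Matrix (Fin 3) (Fin 3) ℝ) (a b : Fin 3 → ℝ)
    (T : Fin 3 → Matrix (Fin 3) (Fin 3) ℝ)
    (hT : ∀ k, T k = vecMulVec (A.mulVec (Pi.single k 1)) b -
        vecMulVec a (B.mulVec (Pi.single k 1)))
    (α β γ : ℝ) :
    (α • T 0 + β • T 1 + γ • T 2).det = 0 := by
  have h : α • T 0 + β • T 1 + γ • T 2 =
      vecMulVec (A.mulVec ![α, β, γ]) b -
      vecMulVec a (B.mulVec ![α, β, γ]) := by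
    ext i j
    simp [hT, vecMulVec_apply, Matrix.mulVec, dotProduct, Fin.sum_univ_three]
    ring
  rw [h, aux_rank2_det]
end

section
/- Let Tₖ = A eₖ bᵀ − a eₖᵀ Bᵀ (k = 1,2,3) be trifocal tensor slices with each Tₖ of rank 2, and let lₖ, rₖ be left and right null vectors of Tₖ. Then det[l₁ l₂ l₃] = 0 and det[r₁ r₂ r₃] = 0 (the epipolar constraints); indeed one may take lₖ = [a]ₓ A eₖ and rₖ = [b]ₓ B eₖ, and det([a]ₓ A) = det([b]ₓ B) = 0. -/
open Matrix

lemma skew_det (t : Fin 3 → ℝ) : (skew t).det = 0 := by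
  simp [skew, Matrix.det_fin_three]; ring

theorem stmt_13 (A B : Matrix (Fin 3) (Fin 3) ℝ) (a b : Fin 3 → ℝ)
    (T : Fin 3 → Matrix (Fin 3) (Fin 3) ℝ)
    (hT : ∀ k, T k = vecMulVec (A.mulVec (Pi.single k 1)) b -
        vecMulVec a (B.mulVec (Pi.single k 1)))
    (hrank : ∀ k, (T k).rank = 2)
    (l r : Fin 3 → Fin 3 → ℝ)
    (hl : ∀ k, l k = (skew a * A).mulVec (Pi.single k 1))
    (hr : ∀ k, r k = (skew b * B).mulVec (Pi.single k 1)) :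
    (∀ k, Matrix.vecMul (l k) (T k) = 0) ∧
    (∀ k, (T k).mulVec (r k) = 0) ∧
    (skew a * A).det = 0 ∧ (skew b * B).det = 0 ∧
    (Matrix.of fun i k => l k i).det = 0 ∧ (Matrix.of fun i k => r k i).det = 0 := by
  have hla : (Matrix.of fun i k => l k i) = skew a * A := by
    ext i j
    simp [hl, mulVec_single]
  have hra : (Matrix.of fun i k => r k i) = skew b * B := by
    ext i j
    simp [hr, mulVec_single]
  have hdetA : (skew a * A).det = 0 := by rw [Matrix.det_mul, skew_det, zero_mul]
  have hdetB : (skew b * B).det = 0 := by rw [Matrix.det_mul, skew_det, zero_mul]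
  refine ⟨?_, ?_, hdetA, hdetB, hla ▸ hdetA, hra ▸ hdetB⟩
  · intro k
    rw [hT, hl]
    funext j
    fin_cases k <;> fin_cases j <;>
      simp [vecMul, dotProduct, mulVec, skew, Matrix.mul_apply, Fin.sum_univ_three,
        vecMulVec_apply, Pi.single_apply] <;> ring
  · intro k
    rw [hT, hr]
    funext i
    fin_cases k <;> fin_cases i <;>
      simp [vecMul, dotProduct, mulVec, skew, Matrix.mul_apply, Fin.sum_univ_three,
        vecMulVec_apply, Pi.single_apply] <;> ring
end

section
/- Let T̂ₖ = R₂ eₖ t₃ᵀ − t₂ eₖᵀ R₃ᵀ be a calibrated trifocal tensor (R₂, R₃ ∈ SO(3,ℂ), t₂, t₃ ∈ ℂ³), set Uₖ = T̂ₖ T̂ₖᵀ, Vₖ = T̂ₖ T̂ₖ₊₁ᵀ + T̂ₖ₊₁ T̂ₖᵀ (indices mod 3), and ψ(X,Y) = trace(X)trace(Y) − 2 trace(XY). Then ψ(U₃ − U₁, U₃ − U₁) − ψ(V₃, V₃) = 0, ψ(U₃ − U₁, V₁) + ψ(V₂, V₃) = 0, and ψ(U₁ − U₂, V₁) = 0.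 -/
/-!
Write `T̂ₖ = R₂ Sₖ R₃ᵀ` with `Sₖ = eₖ uᵀ − v eₖᵀ`, `u = R₃ᵀ t₃`, `v = R₂ᵀ t₂`. Since `R₃ᵀ R₃ = 1`,
every `T̂ₖ T̂ₗᵀ` is the conjugate `R₂ (Sₖ Sₗᵀ) R₂ᵀ`, and `ψ` is invariant under conjugation by an
orthogonal matrix. So it suffices to take `R₂ = R₃ = 1`, where the three identities are polynomial
identities in the six coordinates of `u` and `v`.
-/

open Matrix

section

variable {l n m R : Type*} [CommRing R]

def traceForm [Fintype n] (X Y : Matrix n n R) : R := X.trace * Y.trace - 2 * (X * Y).trace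

def trifocalU [Fintype m] (T : Fin 3 → Matrix n m R) (k : Fin 3) : Matrix n n R := T k * (T k)ᵀ

def trifocalV [Fintype m] (T : Fin 3 → Matrix n m R) (k : Fin 3) : Matrix n n R :=
  T k * (T (k + 1))ᵀ + T (k + 1) * (T k)ᵀ

def TrifocalConstraints [Fintype n] [Fintype m] (T : Fin 3 → Matrix n m R) : Prop :=
  let U := trifocalU T
  let V := trifocalV T
  traceForm (U 2 - U 0) (U 2 - U 0) - traceForm (V 2) (V 2) = 0 ∧
    traceForm (U 2 - U 0) (V 0) + traceForm (V 1) (V 2) = 0 ∧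
    traceForm (U 0 - U 1) (V 0) = 0

theorem trace_conj_of_transpose_mul_self [Fintype n] [DecidableEq n] {Q : Matrix n n R}
    (hQ : Qᵀ * Q = 1) (X : Matrix n n R) :
    (Q * X * Qᵀ).trace = X.trace := by
  rw [trace_mul_cycle, hQ, one_mul]

theorem traceForm_conj [Fintype n] [DecidableEq n] {Q : Matrix n n R} (hQ : Qᵀ * Q = 1)
    (X Y : Matrix n n R) :
    traceForm (Q * X * Qᵀ) (Q * Y * Qᵀ) = traceForm X Y := by
  have hXY : Q * X * Qᵀ * (Q * Y * Qᵀ) = Q * (X * Y) * Qᵀ := by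
    simp only [Matrix.mul_assoc, ← Matrix.mul_assoc Qᵀ Q, hQ, Matrix.one_mul]
  simp only [traceForm, hXY, trace_conj_of_transpose_mul_self hQ]

theorem mul_mul_transpose_mul_transpose [Fintype n] [Fintype m] [DecidableEq m]
    {P : Matrix m m R} (hP : Pᵀ * P = 1) (Q : Matrix l n R) (A B : Matrix n m R) :
    Q * A * Pᵀ * (Q * B * Pᵀ)ᵀ = Q * (A * Bᵀ) * Qᵀ := by
  simp only [transpose_mul, transpose_transpose, Matrix.mul_assoc]
  rw [← Matrix.mul_assoc Pᵀ, hP, Matrix.one_mul]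

theorem TrifocalConstraints.conj [Fintype n] [DecidableEq n] [Fintype m] [DecidableEq m]
    {T : Fin 3 → Matrix n m R} (hT : TrifocalConstraints T) {Q : Matrix n n R} {P : Matrix m m R}
    (hQ : Qᵀ * Q = 1) (hP : Pᵀ * P = 1) :
    TrifocalConstraints fun k => Q * T k * Pᵀ := by
  have hU : ∀ k, trifocalU (fun k => Q * T k * Pᵀ) k = Q * trifocalU T k * Qᵀ := fun k =>
    mul_mul_transpose_mul_transpose hP Q (T k) (T k)
  have hV : ∀ k, trifocalV (fun k => Q * T k * Pᵀ) k = Q * trifocalV T k * Qᵀ := fun k => by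
    simp only [trifocalV, mul_mul_transpose_mul_transpose hP, Matrix.mul_add, Matrix.add_mul]
  simp only [TrifocalConstraints, hU, hV, ← Matrix.mul_sub, ← Matrix.sub_mul, traceForm_conj hQ]
  exact hT

theorem mul_vecMulVec_mul_transpose [Fintype m] (A B : Matrix n m R) (x y : m → R) :
    A * vecMulVec x y * Bᵀ = vecMulVec (A *ᵥ x) (B *ᵥ y) := by
  rw [mul_vecMulVec, vecMulVec_mul, vecMul_transpose]

variable [DecidableEq n]

def calibratedSlice (u v : n → R) (k : n) : Matrix n n R :=
  vecMulVec (Pi.single k 1) u - vecMulVec v (Pi.single k 1)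

theorem calibratedSlice_apply (u v : n → R) (k i j : n) :
    calibratedSlice u v k i j = (if i = k then u j else 0) - (if j = k then v i else 0) := by
  simp [calibratedSlice, vecMulVec_apply, Pi.single_apply]

theorem vecMulVec_sub_vecMulVec_eq_conj_calibratedSlice [Fintype n] {R₂ R₃ : Matrix n n R}
    (hR₂ : R₂ * R₂ᵀ = 1) (hR₃ : R₃ * R₃ᵀ = 1) (t₂ t₃ : n → R) (k : n) :
    vecMulVec (R₂ *ᵥ Pi.single k 1) t₃ - vecMulVec t₂ (R₃ *ᵥ Pi.single k 1) =
      R₂ * calibratedSlice (R₃ᵀ *ᵥ t₃) (R₂ᵀ *ᵥ t₂) k * R₃ᵀ := by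
  rw [calibratedSlice, Matrix.mul_sub, Matrix.sub_mul, mul_vecMulVec_mul_transpose,
    mul_vecMulVec_mul_transpose, mulVec_mulVec, mulVec_mulVec, hR₂, hR₃, one_mulVec, one_mulVec]

end

theorem trifocalConstraints_calibratedSlice {R : Type*} [CommRing R] (u v : Fin 3 → R) :
    TrifocalConstraints (calibratedSlice u v) := by
  simp only [TrifocalConstraints, trifocalU, trifocalV, traceForm, Fin.reduceAdd, trace_fin_three,
    mul_apply, Fin.sum_univ_three, transpose_apply, Matrix.sub_apply, Matrix.add_apply,
    calibratedSlice_apply, Fin.isValue, Fin.reduceEq, if_true, if_false]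
  refine ⟨?_, ?_, ?_⟩ <;> ring

theorem stmt_17_general (R₂ R₃ : Matrix (Fin 3) (Fin 3) ℂ)
    (hR₂ : R₂ * R₂ᵀ = 1)
    (hR₃ : R₃ * R₃ᵀ = 1)
    (t₂ t₃ : Fin 3 → ℂ)
    (T : Fin 3 → Matrix (Fin 3) (Fin 3) ℂ)
    (hT : ∀ k, T k = vecMulVec (R₂.mulVec (Pi.single k 1)) t₃ -
        vecMulVec t₂ (R₃.mulVec (Pi.single k 1)))
    (U V : Fin 3 → Matrix (Fin 3) (Fin 3) ℂ)
    (hU : ∀ k, U k = T k * (T k)ᵀ)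
    (hV : ∀ k, V k = T k * (T (k + 1))ᵀ + T (k + 1) * (T k)ᵀ)
    (ψ : Matrix (Fin 3) (Fin 3) ℂ → Matrix (Fin 3) (Fin 3) ℂ → ℂ)
    (hψ : ∀ X Y, ψ X Y = X.trace * Y.trace - 2 * (X * Y).trace) :
    ψ (U 2 - U 0) (U 2 - U 0) - ψ (V 2) (V 2) = 0 ∧
    ψ (U 2 - U 0) (V 0) + ψ (V 1) (V 2) = 0 ∧
    ψ (U 0 - U 1) (V 0) = 0 := by
  have hT' : T = fun k => R₂ * calibratedSlice (R₃ᵀ *ᵥ t₃) (R₂ᵀ *ᵥ t₂) k * R₃ᵀ :=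
    funext fun k => (hT k).trans (vecMulVec_sub_vecMulVec_eq_conj_calibratedSlice hR₂ hR₃ t₂ t₃ k)
  have hU' : U = trifocalU T := funext hU
  have hV' : V = trifocalV T := funext hV
  have hψ' : ψ = traceForm := funext fun X => funext (hψ X)
  subst hU' hV' hψ' hT'
  exact TrifocalConstraints.conj (trifocalConstraints_calibratedSlice _ _)
    (mul_eq_one_comm.mp hR₂) (mul_eq_one_comm.mp hR₃)

theorem stmt_17 (R₂ R₃ : Matrix (Fin 3) (Fin 3) ℂ)
    (hR₂ : R₂ * R₂ᵀ = 1) (hdR₂ : R₂.det = 1)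
    (hR₃ : R₃ * R₃ᵀ = 1) (hdR₃ : R₃.det = 1)
    (t₂ t₃ : Fin 3 → ℂ)
    (T : Fin 3 → Matrix (Fin 3) (Fin 3) ℂ)
    (hT : ∀ k, T k = vecMulVec (R₂.mulVec (Pi.single k 1)) t₃ -
        vecMulVec t₂ (R₃.mulVec (Pi.single k 1)))
    (U V : Fin 3 → Matrix (Fin 3) (Fin 3) ℂ)
    (hU : ∀ k, U k = T k * (T k)ᵀ)
    (hV : ∀ k, V k = T k * (T (k + 1))ᵀ + T (k + 1) * (T k)ᵀ)
    (ψ : Matrix (Fin 3) (Fin 3) ℂ → Matrix (Fin 3) (Fin 3) ℂ → ℂ)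
    (hψ : ∀ X Y, ψ X Y = X.trace * Y.trace - 2 * (X * Y).trace) :
    ψ (U 2 - U 0) (U 2 - U 0) - ψ (V 2) (V 2) = 0 ∧
    ψ (U 2 - U 0) (V 0) + ψ (V 1) (V 2) = 0 ∧
    ψ (U 0 - U 1) (V 0) = 0 :=
  stmt_17_general R₂ R₃ hR₂ hR₃ t₂ t₃ T hT U V hU hV ψ hψ
end

section
/- Let T̂ₖ = eₖ t₃ᵀ − t₂ eₖᵀ (k = 1,2,3) with t₂, t₃ ∈ ℂ³, and set Uₖ = T̂ₖ T̂ₖᵀ, Vₖ = T̂ₖ T̂ₖ₊₁ᵀ + T̂ₖ₊₁ T̂ₖᵀ (indices mod 3). Then trace(U₂)² − trace(V₃)² − trace(U₂² − V₃² + (U₃ − U₁)²) = 0 and trace(V₂)·trace(U₁ − 2U₂ − U₃) − trace(V₁)·trace(V₃) + 2 trace(V₂ U₂) = 0. -/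
open Matrix

theorem stmt_18 (t₂ t₃ : Fin 3 → ℂ)
    (T : Fin 3 → Matrix (Fin 3) (Fin 3) ℂ)
    (hT : ∀ k, T k = vecMulVec (Pi.single k 1) t₃ - vecMulVec t₂ (Pi.single k 1))
    (U V : Fin 3 → Matrix (Fin 3) (Fin 3) ℂ)
    (hU : ∀ k, U k = T k * (T k)ᵀ)
    (hV : ∀ k, V k = T k * (T (k + 1))ᵀ + T (k + 1) * (T k)ᵀ) :
    (U 1).trace ^ 2 - (V 2).trace ^ 2 -
      (U 1 * U 1 - V 2 * V 2 + (U 2 - U 0) * (U 2 - U 0)).trace = 0 ∧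
    (V 1).trace * (U 0 - 2 • U 1 - U 2).trace - (V 0).trace * (V 2).trace +
      2 * (V 1 * U 1).trace = 0 := by
  simp only [hU, hV, hT, two_smul]
  constructor <;>
  · simp [Matrix.trace, Matrix.diag, Matrix.mul_apply, Matrix.sub_apply, Matrix.add_apply,
      Matrix.transpose_apply, vecMulVec_apply, Fin.sum_univ_succ, Pi.single_apply,
      Fin.isValue, Matrix.smul_apply, nsmul_eq_mul, Nat.cast_ofNat, smul_eq_mul]
    ring
end
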